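/- Let M and N be closed subspaces of a Banach space Z. Then |K_s(M) − K_s(N)| ≤ 2·g(M,N), where K_s is the symmetric Kottman constant and g is the gap between subspaces. -/
import Mathlib


noncomputable section
open Metric Set

/-- The Kottman constant of a normed space. -/
def kottman (X : Type*) [NormedAddCommGroup X] : ℝ :=
  sSup {σ : ℝ | 0 < σ ∧ ∃ x : ℕ → X, (∀ n, ‖x n‖ ≤ 1) ∧
    ∀ n m, n ≠ m → σ ≤ ‖x n - x m‖}

def symKottman (X : Type*) [NormedAddCommGroup X] : ℝ :=
  sSup {σ : ℝ | 0 < σ ∧ ∃ x : ℕ → X, (∀ n, ‖x n‖ ≤ 1) ∧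
    ∀ n m, n ≠ m → σ ≤ ‖x n - x m‖ ∧ σ ≤ ‖x n + x m‖}

def finKottman (X : Type*) [NormedAddCommGroup X] : ℝ :=
  sSup {σ : ℝ | 0 < σ ∧ ∀ N : ℕ, ∃ x : Fin N → X, (∀ n, ‖x n‖ ≤ 1) ∧
    ∀ n m, n ≠ m → σ ≤ ‖x n - x m‖}

/-- The gap between two subsets (typically closed subspaces) of a normed space,
measured between their unit balls. -/
def gap {Z : Type*} [NormedAddCommGroup Z] (M N : Set Z) : ℝ :=
  max (sSup ((fun x => Metric.infDist x (N ∩ Metric.closedBall 0 1)) '' (M ∩ Metric.closedBall 0 1)))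
      (sSup ((fun y => Metric.infDist y (M ∩ Metric.closedBall 0 1)) '' (N ∩ Metric.closedBall 0 1)))

/-- The Kadets distance between two Banach spaces. -/
def kadets (X Y : Type*) [NormedAddCommGroup X] [NormedSpace ℝ X]
    [NormedAddCommGroup Y] [NormedSpace ℝ Y] : ℝ :=
  sInf {d : ℝ | ∃ (W : Type) (nW : NormedAddCommGroup W) (sW : NormedSpace ℝ W)
    (cW : CompleteSpace W) (i : X →ₗᵢ[ℝ] W) (j : Y →ₗᵢ[ℝ] W),
    d = gap (Set.range i) (Set.range j)}

/-- The isomorphic Kottman constant: infimum of Kottman constants over all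
Banach spaces isomorphic to `X`. -/
def ikottman (X : Type) [NormedAddCommGroup X] [NormedSpace ℝ X] : ℝ :=
  sInf {k : ℝ | ∃ (V : Type) (nV : NormedAddCommGroup V) (sV : NormedSpace ℝ V)
    (cV : CompleteSpace V) (e : X ≃L[ℝ] V), k = kottman V}

/-- Whitley's thickness constant. -/
def whitley (X : Type*) [NormedAddCommGroup X] : ℝ :=
  sInf {ε : ℝ | 0 < ε ∧ ∃ F : Finset X, (∀ f ∈ F, ‖f‖ = 1) ∧
    ∀ x : X, ‖x‖ = 1 → ∃ f ∈ F, ‖x - f‖ ≤ ε}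

/-- The James constant. -/
def james (X : Type*) [NormedAddCommGroup X] : ℝ :=
  sSup {t : ℝ | ∃ x y : X, ‖x‖ = 1 ∧ ‖y‖ = 1 ∧ t = min ‖x - y‖ ‖x + y‖}

def gconst (X : Type*) [NormedAddCommGroup X] : ℝ :=
  sInf {t : ℝ | ∃ x y : X, ‖x‖ = 1 ∧ ‖y‖ = 1 ∧ t = max ‖x - y‖ ‖x + y‖}

section Aux

variable {Z : Type} [NormedAddCommGroup Z] [NormedSpace ℝ Z]

lemma zero_mem_gapball (N : Submodule ℝ Z) :
    (0 : Z) ∈ (N : Set Z) ∩ Metric.closedBall 0 1 :=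
  ⟨N.zero_mem, by simp⟩

lemma bddAbove_symSet (X : Type*) [NormedAddCommGroup X] :
    BddAbove {σ : ℝ | 0 < σ ∧ ∃ x : ℕ → X, (∀ n, ‖x n‖ ≤ 1) ∧
      ∀ n m, n ≠ m → σ ≤ ‖x n - x m‖ ∧ σ ≤ ‖x n + x m‖} := by
  refine ⟨2, ?_⟩
  rintro σ ⟨hσ, x, hx, h⟩
  calc σ ≤ ‖x 0 - x 1‖ := (h 0 1 (by norm_num)).1
    _ ≤ ‖x 0‖ + ‖x 1‖ := norm_sub_le _ _
    _ ≤ 2 := by linarith [hx 0, hx 1]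

lemma symKottman_nonneg (X : Type*) [NormedAddCommGroup X] : 0 ≤ symKottman X :=
  Real.sSup_nonneg (fun σ hσ => hσ.1.le)

lemma gap_nonneg (M N : Submodule ℝ Z) : 0 ≤ gap (M : Set Z) (N : Set Z) :=
  le_trans (Real.sSup_nonneg (by rintro _ ⟨x, hx, rfl⟩; exact Metric.infDist_nonneg))
    (le_max_left _ _)

lemma infDist_le_gap (M N : Submodule ℝ Z) {x : Z}
    (hx : x ∈ (M : Set Z) ∩ Metric.closedBall 0 1) :
    Metric.infDist x ((N : Set Z) ∩ Metric.closedBall 0 1) ≤ gap (M : Set Z) (N : Set Z) := by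
  refine le_trans ?_ (le_max_left _ _)
  apply le_csSup
  · refine ⟨1, ?_⟩
    rintro _ ⟨z, hz, rfl⟩
    calc Metric.infDist z ((N : Set Z) ∩ Metric.closedBall 0 1)
        ≤ dist z 0 := Metric.infDist_le_dist_of_mem (zero_mem_gapball N)
      _ ≤ 1 := by simpa [Metric.mem_closedBall] using hz.2
  · exact Set.mem_image_of_mem _ hx

lemma symKottman_le_symKottman_add (M N : Submodule ℝ Z) :
    symKottman M ≤ symKottman N + 2 * gap (M : Set Z) (N : Set Z) := by
  have hg0 := gap_nonneg M N
  have hKN := symKottman_nonneg N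
  set g := gap (M : Set Z) (N : Set Z) with hgdef
  apply Real.sSup_le _ (by linarith)
  rintro σ ⟨hσ, x, hx, h⟩
  refine le_of_forall_pos_le_add ?_
  intro ε hε
  have hmem : ∀ n, ((x n : Z)) ∈ (M : Set Z) ∩ Metric.closedBall 0 1 := by
    intro n
    refine ⟨(x n).2, ?_⟩
    simpa [Metric.mem_closedBall, dist_zero_right] using hx n
  have hlt : ∀ n, ∃ y ∈ (N : Set Z) ∩ Metric.closedBall 0 1,
      dist (x n : Z) y < g + ε / 2 := by
    intro n
    apply (Metric.infDist_lt_iff ⟨0, zero_mem_gapball N⟩).1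
    have := infDist_le_gap M N (hmem n)
    linarith
  choose y hy hdist using hlt
  rcases le_or_gt (σ - 2 * g - ε) 0 with hcase | hcase
  · linarith
  · have hσ'mem : (σ - 2 * g - ε) ∈ {σ : ℝ | 0 < σ ∧ ∃ x : ℕ → N, (∀ n, ‖x n‖ ≤ 1) ∧
        ∀ n m, n ≠ m → σ ≤ ‖x n - x m‖ ∧ σ ≤ ‖x n + x m‖} := by
      refine ⟨hcase, fun n => ⟨y n, (hy n).1⟩, ?_, ?_⟩
      · intro n
        have := (hy n).2
        simpa [Metric.mem_closedBall, dist_zero_right] using this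
      · intro n m hnm
        have hd := h n m hnm
        have hxz : ‖x n - x m‖ = ‖(x n : Z) - (x m : Z)‖ := by
          norm_cast
        have hxz' : ‖x n + x m‖ = ‖(x n : Z) + (x m : Z)‖ := by
          norm_cast
        have hn := hdist n
        have hm := hdist m
        constructor
        · have htri := dist_triangle4 (x n : Z) (y n) (y m) (x m : Z)
          have h1 : σ ≤ dist (x n : Z) (x m : Z) := by
            rw [dist_eq_norm, ← hxz]; exact hd.1
          have h2 : dist (y m) (x m : Z) = dist (x m : Z) (y m) := dist_comm _ _
          have hyd : σ - 2 * g - ε ≤ dist (y n) (y m) := by linarith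
          have heq : ‖(⟨y n, (hy n).1⟩ - ⟨y m, (hy m).1⟩ : N)‖ = dist (y n) (y m) := by
            rw [dist_eq_norm]; norm_cast
          rw [heq]; exact hyd
        · have hsum : (x n : Z) + (x m : Z) =
              (y n + y m) + ((x n : Z) - y n) + ((x m : Z) - y m) := by abel
          have htri : ‖(x n : Z) + (x m : Z)‖ ≤
              ‖y n + y m‖ + ‖(x n : Z) - y n‖ + ‖(x m : Z) - y m‖ := by
            rw [hsum]
            refine le_trans (norm_add_le _ _) ?_
            have := norm_add_le (y n + y m) ((x n : Z) - y n)
            linarith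
          have h1 : σ ≤ ‖(x n : Z) + (x m : Z)‖ := hxz' ▸ hd.2
          have hn' : ‖(x n : Z) - y n‖ < g + ε / 2 := by
            rw [← dist_eq_norm]; exact hn
          have hm' : ‖(x m : Z) - y m‖ < g + ε / 2 := by
            rw [← dist_eq_norm]; exact hm
          have heq : ‖(⟨y n, (hy n).1⟩ + ⟨y m, (hy m).1⟩ : N)‖ = ‖y n + y m‖ := by
            norm_cast
          rw [heq]; linarith
    have hle := le_csSup (bddAbove_symSet N) hσ'mem
    unfold symKottman
    linarith

lemma gap_comm' (M N : Submodule ℝ Z) :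
    gap (N : Set Z) (M : Set Z) = gap (M : Set Z) (N : Set Z) := max_comm _ _

end Aux

/-- For closed subspaces `M, N` of a Banach space `Z`,
`|K_s(M) - K_s(N)| ≤ 2 g(M,N)` for the symmetric Kottman constant. -/
theorem abs_symKottman_sub_symKottman_le_two_mul_gap
    (Z : Type) [NormedAddCommGroup Z] [NormedSpace ℝ Z] [CompleteSpace Z]
    (M N : Submodule ℝ Z) (hM : IsClosed (M : Set Z)) (hN : IsClosed (N : Set Z)) :
    |symKottman M - symKottman N| ≤ 2 * gap (M : Set Z) (N : Set Z) := by
  have h1 := symKottman_le_symKottman_add M N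
  have h2 := symKottman_le_symKottman_add N M
  have hc := gap_comm' M N
  rw [abs_sub_le_iff]
  constructor <;> linarith
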